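/- arXiv:1904.11078 — 2 statements merged into one kernel-verified Lean document; each statement's English description precedes it below -/
import Mathlib

section
/- Lemma (existence of a good family of paths): Fix any assignment of the labels good/bad to the vertices of Z² and a vertex i. If the events A, B, and C_n for every n ∈ {1,…,n*} all occur, then there exists a good family of paths for i. -/
open Finset

/-- Vertices of `ℤ²`. -/
abbrev V2 := ℤ × ℤ

/-- ℓ¹-distance on `ℤ²`. -/
def d1 (a b : V2) : ℕ := (a.1 - b.1).natAbs + (a.2 - b.2).natAbs

/-- `γ` makes up-right (oriented) steps up to length `m`:
every step adds `e₁ = (1,0)` or `e₂ = (0,1)`. -/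
def URSteps (γ : ℕ → V2) (m : ℕ) : Prop :=
  ∀ t, t + 1 < m → γ (t + 1) = γ t + (1, 0) ∨ γ (t + 1) = γ t + (0, 1)

/-- `γ` is an up-right path of length `m` starting at `i`. -/
def IsURPath (γ : ℕ → V2) (m : ℕ) (i : V2) : Prop := γ 0 = i ∧ URSteps γ m

/-- All vertices of the path are good. -/
def GoodOn (ω : V2 → Bool) (γ : ℕ → V2) (m : ℕ) : Prop := ∀ t < m, ω (γ t) = true

/-- The path of length `m` is focused: all its vertices are at ℓ¹-distance at most `√m`
from the half-line `{i + s(e₁+e₂) : s ∈ ℕ}`. -/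
def Focused (γ : ℕ → V2) (m : ℕ) (i : V2) : Prop :=
  ∀ t < m, ∃ s : ℕ, d1 (γ t) (i.1 + (s : ℤ), i.2 + (s : ℤ)) ≤ Nat.sqrt m

/-- The diagonal segment `D_i` (with `√N/2` as half-length). -/
def InD (i : V2) (N : ℕ) (v : V2) : Prop :=
  ∃ t : ℤ, |t| ≤ (Nat.sqrt N : ℤ) / 2 ∧
    v = (i.1 + (Nat.sqrt N : ℤ) / 2 - t, i.2 + (Nat.sqrt N : ℤ) / 2 + t)

/-- The horizontal rectangle `H_n` based at `i`, of sides `ℓ_n = 10^n` and `ℓ_{n-1}`. -/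
def InH (i : V2) (n : ℕ) (v : V2) : Prop :=
  i.1 ≤ v.1 ∧ v.1 ≤ i.1 + 10 ^ n ∧ i.2 ≤ v.2 ∧ v.2 ≤ i.2 + 10 ^ (n - 1)

/-- The vertical rectangle `V_n` based at `i`. -/
def InV (i : V2) (n : ℕ) (v : V2) : Prop :=
  i.1 ≤ v.1 ∧ v.1 ≤ i.1 + 10 ^ (n - 1) ∧ i.2 ≤ v.2 ∧ v.2 ≤ i.2 + 10 ^ n

/-- The rectangle `R_i` whose short sides are `D_i` and `D_i + 2N(e₁+e₂)`. -/
def InR (i : V2) (N : ℕ) (v : V2) : Prop :=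
  (Nat.sqrt N : ℤ) ≤ (v.1 - i.1) + (v.2 - i.2) ∧
  (v.1 - i.1) + (v.2 - i.2) ≤ (Nat.sqrt N : ℤ) + 4 * N ∧
  |(v.1 - i.1) - (v.2 - i.2)| ≤ (Nat.sqrt N : ℤ)

/-- A good up-right hard crossing of `H_n`: a good up-right path contained in `H_n`
connecting its two short (vertical) sides. -/
def HardCrossH (ω : V2 → Bool) (i : V2) (n : ℕ) : Prop :=
  ∃ (γ : ℕ → V2) (m : ℕ), 1 ≤ m ∧ URSteps γ m ∧ GoodOn ω γ m ∧
    (∀ t < m, InH i n (γ t)) ∧ (γ 0).1 = i.1 ∧ (γ (m - 1)).1 = i.1 + 10 ^ n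

/-- A good up-right hard crossing of `V_n`. -/
def HardCrossV (ω : V2 → Bool) (i : V2) (n : ℕ) : Prop :=
  ∃ (γ : ℕ → V2) (m : ℕ), 1 ≤ m ∧ URSteps γ m ∧ GoodOn ω γ m ∧
    (∀ t < m, InV i n (γ t)) ∧ (γ 0).2 = i.2 ∧ (γ (m - 1)).2 = i.2 + 10 ^ n

/-- Event `C_n`: `i` is good and there are good up-right hard crossings of `H_n` and `V_n`. -/
def EventC (ω : V2 → Bool) (i : V2) (n : ℕ) : Prop :=
  ω i = true ∧ HardCrossH ω i n ∧ HardCrossV ω i n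

/-- Event `B` (with `N = 100^n`, `√N = 10^n = ℓ_{n*}`): the set
`∪_{0≤t≤√N} {i+te₁} ∪ {i+te₂}` is connected by good up-right paths to at least `0.7 √N`
vertices of `D_i \ (H_{n*} ∪ V_{n*})`. -/
def EventB (ω : V2 → Bool) (i : V2) (n : ℕ) : Prop :=
  ∃ W : Finset V2,
    (∀ v ∈ W, InD i (100 ^ n) v ∧ ¬ InH i n v ∧ ¬ InV i n v) ∧
    7 * 10 ^ n ≤ 10 * W.card ∧
    ∀ v ∈ W, ∃ (γ : ℕ → V2) (m : ℕ), 1 ≤ m ∧ URSteps γ m ∧ GoodOn ω γ m ∧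
      (∃ t : ℕ, t ≤ 10 ^ n ∧ (γ 0 = (i.1 + (t : ℤ), i.2) ∨ γ 0 = (i.1, i.2 + (t : ℤ)))) ∧
      γ (m - 1) = v

/-- Event `A`: there are at least `1.9 √N` pairwise edge-disjoint good up-right paths
contained in `R_i` connecting `D_i` with `D_i + 2N(e₁+e₂)`. -/
def EventA (ω : V2 → Bool) (i : V2) (N : ℕ) : Prop :=
  ∃ (M : ℕ) (Γ : Fin M → ℕ → V2) (ms : Fin M → ℕ),
    19 * Nat.sqrt N ≤ 10 * M ∧
    (∀ a : Fin M, 1 ≤ ms a ∧ URSteps (Γ a) (ms a) ∧ GoodOn ω (Γ a) (ms a) ∧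
      (∀ t < ms a, InR i N (Γ a t)) ∧ InD i N (Γ a 0) ∧
      InD (i.1 + 2 * N, i.2 + 2 * N) N (Γ a (ms a - 1))) ∧
    ∀ a b : Fin M, a ≠ b → ∀ t t', t + 1 < ms a → t' + 1 < ms b →
      ¬(Γ a t = Γ b t' ∧ Γ a (t + 1) = Γ b (t' + 1))

/-- A good family of paths for `i`: at least `√N/2` good up-right focused paths of length
`2N` starting at `i`, any edge shared by two of them being within distance `√N` of `i`. -/
def GoodFamilyP (ω : V2 → Bool) (N : ℕ) (i : V2) : Prop :=
  ∃ (M : ℕ) (Γ : Fin M → ℕ → V2),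
    Nat.sqrt N ≤ 2 * M ∧
    (∀ a : Fin M, IsURPath (Γ a) (2 * N) i ∧ GoodOn ω (Γ a) (2 * N) ∧
      Focused (Γ a) (2 * N) i) ∧
    (∀ a b : Fin M, a ≠ b → ∀ t t', t + 1 < 2 * N → t' + 1 < 2 * N →
      Γ a t = Γ b t' → Γ a (t + 1) = Γ b (t' + 1) → d1 (Γ a t) i ≤ Nat.sqrt N)


namespace GF

lemma ur_mono {γ : ℕ → V2} {m m' : ℕ} (h : URSteps γ m) (hm : m' ≤ m) : URSteps γ m' :=
  fun t ht => h t (lt_of_lt_of_le ht hm)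

lemma step1 {γ : ℕ → V2} {m : ℕ} (h : URSteps γ m) {t : ℕ} (ht : t + 1 < m) :
    ((γ (t+1)).1 = (γ t).1 + 1 ∧ (γ (t+1)).2 = (γ t).2) ∨
    ((γ (t+1)).1 = (γ t).1 ∧ (γ (t+1)).2 = (γ t).2 + 1) := by
  rcases h t ht with h1 | h1 <;> [left; right] <;> rw [h1] <;> simp

lemma shift {γ : ℕ → V2} {m : ℕ} (h : URSteps γ m) (a : ℕ) :
    ∀ k, a + k < m →
      ((γ (a+k)).1 + (γ (a+k)).2 = (γ a).1 + (γ a).2 + k) ∧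
      (γ a).1 ≤ (γ (a+k)).1 ∧ (γ a).2 ≤ (γ (a+k)).2 := by
  intro k
  induction k with
  | zero => intro _; simp
  | succ k ih =>
    intro hk
    have h1 := ih (by omega)
    have h2 := step1 h (t := a + k) (by omega)
    have he : a + (k+1) = (a+k) + 1 := by omega
    rw [he]
    rcases h2 with ⟨hx,hy⟩|⟨hx,hy⟩ <;> refine ⟨by push_cast; omega, by omega, by omega⟩

lemma ivt (g : ℕ → ℤ) : ∀ k, (∀ t, t < k → g (t+1) ≤ g t + 1) → g 0 ≤ 0 → 0 ≤ g k →
    ∃ t, t ≤ k ∧ g t = 0 := by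
  intro k
  induction k with
  | zero => intro _ h1 h2; exact ⟨0, le_refl 0, le_antisymm h1 h2⟩
  | succ k ih =>
    intro hs h0 hk
    by_cases h : 0 ≤ g k
    · obtain ⟨t, ht, h⟩ := ih (fun t ht => hs t (by omega)) h0 h
      exact ⟨t, by omega, h⟩
    · have := hs k (by omega)
      exact ⟨k+1, le_refl _, by omega⟩

lemma meetX {γ δ : ℕ → V2} {mγ mδ : ℕ} (hγ : URSteps γ mγ) (hδ : URSteps δ mδ)
    (a b k : ℕ) (ha : a + k < mγ) (hb : b + k < mδ)
    (hlv : (γ a).1 + (γ a).2 = (δ b).1 + (δ b).2)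
    (h0 : (δ b).1 ≤ (γ a).1) (hk : (γ (a+k)).1 ≤ (δ (b+k)).1) :
    ∃ t, t ≤ k ∧ γ (a+t) = δ (b+t) := by
  have hstep : ∀ t, t < k → (fun t => (δ (b+t)).1 - (γ (a+t)).1) (t+1) ≤
      (fun t => (δ (b+t)).1 - (γ (a+t)).1) t + 1 := by
    intro t ht
    have s1 := step1 hδ (t := b + t) (by omega)
    have s2 := step1 hγ (t := a + t) (by omega)
    have e1 : b + (t+1) = (b+t)+1 := by omega
    have e2 : a + (t+1) = (a+t)+1 := by omega
    simp only [e1, e2]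
    rcases s1 with ⟨h1,_⟩|⟨h1,_⟩ <;> rcases s2 with ⟨h2,_⟩|⟨h2,_⟩ <;> omega
  obtain ⟨t, htk, ht⟩ := ivt (fun t => (δ (b+t)).1 - (γ (a+t)).1) k hstep
    (by simp only [Nat.add_zero]; omega) (by show 0 ≤ (δ (b+k)).1 - (γ (a+k)).1; omega)
  refine ⟨t, htk, ?_⟩
  have h1 := (shift hγ a t (by omega)).1
  have h2 := (shift hδ b t (by omega)).1

  have hx : (γ (a+t)).1 = (δ (b+t)).1 := by omega
  exact Prod.ext hx (by omega)

lemma meetY {γ δ : ℕ → V2} {mγ mδ : ℕ} (hγ : URSteps γ mγ) (hδ : URSteps δ mδ)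
    (a b k : ℕ) (ha : a + k < mγ) (hb : b + k < mδ)
    (hlv : (γ a).1 + (γ a).2 = (δ b).1 + (δ b).2)
    (h0 : (δ b).2 ≤ (γ a).2) (hk : (γ (a+k)).2 ≤ (δ (b+k)).2) :
    ∃ t, t ≤ k ∧ γ (a+t) = δ (b+t) := by
  have hstep : ∀ t, t < k → (fun t => (δ (b+t)).2 - (γ (a+t)).2) (t+1) ≤
      (fun t => (δ (b+t)).2 - (γ (a+t)).2) t + 1 := by
    intro t ht
    have s1 := step1 hδ (t := b + t) (by omega)
    have s2 := step1 hγ (t := a + t) (by omega)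
    have e1 : b + (t+1) = (b+t)+1 := by omega
    have e2 : a + (t+1) = (a+t)+1 := by omega
    simp only [e1, e2]
    rcases s1 with ⟨_,h1⟩|⟨_,h1⟩ <;> rcases s2 with ⟨_,h2⟩|⟨_,h2⟩ <;> omega
  obtain ⟨t, htk, ht⟩ := ivt (fun t => (δ (b+t)).2 - (γ (a+t)).2) k hstep
    (by simp only [Nat.add_zero]; omega) (by show 0 ≤ (δ (b+k)).2 - (γ (a+k)).2; omega)
  refine ⟨t, htk, ?_⟩
  have h1 := (shift hγ a t (by omega)).1
  have h2 := (shift hδ b t (by omega)).1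

  have hy : (γ (a+t)).2 = (δ (b+t)).2 := by omega
  exact Prod.ext (by omega) hy

def glue (γ δ : ℕ → V2) (p q : ℕ) : ℕ → V2 := fun t => if t ≤ p then γ t else δ (t - p + q)

lemma glue_left {γ δ : ℕ → V2} {p q t : ℕ} (h : t ≤ p) : glue γ δ p q t = γ t := if_pos h

lemma glue_right {γ δ : ℕ → V2} {p q : ℕ} (heq : γ p = δ q) {t : ℕ} (h : p ≤ t) :
    glue γ δ p q t = δ (t - p + q) := by
  by_cases hle : t ≤ p
  · have : t = p := le_antisymm hle h
    subst this
    simpa [glue, Nat.sub_self] using heq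
  · simp [glue, hle]

lemma glue_ur {γ δ : ℕ → V2} {mγ mδ p q : ℕ} (hγ : URSteps γ mγ) (hδ : URSteps δ mδ)
    (hp : p < mγ) (hq : q < mδ) (heq : γ p = δ q) :
    URSteps (glue γ δ p q) (p + (mδ - q)) := by
  intro t ht
  by_cases h : t + 1 ≤ p
  · rw [glue_left h, glue_left (by omega)]
    exact hγ t (by omega)
  · rw [glue_right heq (t := t+1) (by omega)]
    have hval : glue γ δ p q t = δ (t - p + q) := by
      by_cases h3 : t ≤ p
      · have ht' : t = p := by omega
        rw [glue_left h3, ht', heq]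
        congr 1
        omega
      · exact glue_right heq (by omega)
    rw [hval]
    have e : t + 1 - p + q = (t - p + q) + 1 := by omega
    rw [e]
    exact hδ (t - p + q) (by omega)

lemma glue_good {ω : V2 → Bool} {γ δ : ℕ → V2} {mγ mδ p q : ℕ}
    (hγ : GoodOn ω γ mγ) (hδ : GoodOn ω δ mδ)
    (hp : p < mγ) (hq : q < mδ) (heq : γ p = δ q) :
    GoodOn ω (glue γ δ p q) (p + (mδ - q)) := by
  intro t ht
  by_cases h : t ≤ p
  · rw [glue_left h]; exact hγ t (by omega)
  · rw [glue_right heq (by omega)]; exact hδ _ (by omega)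

lemma glue_end {γ δ : ℕ → V2} {mδ p q : ℕ} (hq : q < mδ) (heq : γ p = δ q) :
    glue γ δ p q (p + (mδ - q) - 1) = δ (mδ - 1) := by
  rw [glue_right heq (by omega)]
  congr 1
  omega

/-- A good up-right path from `i` staying in the horizontal strip of height `10^(k-1)`
and reaching `x = i.1 + 10^k`. -/
def Arm1 (ω : V2 → Bool) (i : V2) (k : ℕ) : Prop :=
  ∃ γ m, 1 ≤ m ∧ γ 0 = i ∧ URSteps γ m ∧ GoodOn ω γ m ∧
    (∀ t < m, i.1 ≤ (γ t).1 ∧ i.2 ≤ (γ t).2 ∧ (γ t).2 ≤ i.2 + 10^(k-1)) ∧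
    (γ (m-1)).1 = i.1 + 10^k

/-- Vertical analogue. -/
def Arm2 (ω : V2 → Bool) (i : V2) (k : ℕ) : Prop :=
  ∃ γ m, 1 ≤ m ∧ γ 0 = i ∧ URSteps γ m ∧ GoodOn ω γ m ∧
    (∀ t < m, i.1 ≤ (γ t).1 ∧ i.2 ≤ (γ t).2 ∧ (γ t).1 ≤ i.1 + 10^(k-1)) ∧
    (γ (m-1)).2 = i.2 + 10^k

lemma lv_from_start {γ : ℕ → V2} {m : ℕ} {i : V2} (h0 : γ 0 = i) (hUR : URSteps γ m) :
    ∀ t < m, (γ t).1 + (γ t).2 = i.1 + i.2 + t := by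
  intro t ht
  have := (shift hUR 0 t (by omega)).1
  rw [Nat.zero_add, h0] at this
  omega

lemma mono_from {γ : ℕ → V2} {m : ℕ} (hUR : URSteps γ m) {t t' : ℕ} (h : t ≤ t') (h' : t' < m) :
    (γ t).1 ≤ (γ t').1 ∧ (γ t).2 ≤ (γ t').2 := by
  have := (shift hUR t (t' - t) (by omega))
  rw [show t + (t' - t) = t' by omega] at this
  exact ⟨this.2.1, this.2.2⟩

lemma arm1_base (ω : V2 → Bool) (i : V2) (hC : EventC ω i 1) : Arm1 ω i 1 := by
  obtain ⟨hgood, ⟨P, mP, hPm, hPUR, hPG, hPIn, hPx0, hPend⟩, -⟩ := hC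
  have hpow : (10:ℤ)^(1-1) = 1 := by norm_num
  have hIn : ∀ t < mP, i.1 ≤ (P t).1 ∧ i.2 ≤ (P t).2 ∧ (P t).2 ≤ i.2 + 1 := by
    intro t ht
    obtain ⟨a, b, c, d⟩ := hPIn t ht
    rw [hpow] at d
    exact ⟨a, c, d⟩
  obtain ⟨ha, hc, hd⟩ := hIn 0 (by omega)
  by_cases hy : (P 0).2 = i.2
  · refine ⟨P, mP, hPm, Prod.ext hPx0 hy, hPUR, hPG, ?_, hPend⟩
    intro t ht
    rw [hpow]
    exact hIn t ht
  · have hy1 : (P 0).2 = i.2 + 1 := by omega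
    refine ⟨fun t => if t = 0 then i else P (t - 1), mP + 1, by omega, by simp, ?_, ?_, ?_, ?_⟩
    · intro t ht
      by_cases h : t = 0
      · subst h
        right
        simp only [if_pos rfl, if_neg (by omega : ¬ (0+1 = 0))]
        have he : (0:ℕ) + 1 - 1 = 0 := by norm_num
        rw [he]
        refine Prod.ext ?_ ?_ <;> simp [hPx0, hy1]
      · simp only [if_neg h, if_neg (by omega : ¬ (t+1 = 0))]
        have e : t + 1 - 1 = (t-1) + 1 := by omega
        rw [e]
        exact hPUR (t-1) (by omega)
    · intro t ht
      by_cases h : t = 0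
      · simp [h, hgood]
      · simp only [if_neg h]
        exact hPG (t-1) (by omega)
    · intro t ht
      by_cases h : t = 0
      · simp [h]
      · simp only [if_neg h]
        rw [hpow]
        exact hIn (t-1) (by omega)
    · simp only [Nat.add_sub_cancel, if_neg (by omega : ¬ (mP = 0))]
      exact hPend

lemma arm2_base (ω : V2 → Bool) (i : V2) (hC : EventC ω i 1) : Arm2 ω i 1 := by
  obtain ⟨hgood, -, ⟨P, mP, hPm, hPUR, hPG, hPIn, hPy0, hPend⟩⟩ := hC
  have hpow : (10:ℤ)^(1-1) = 1 := by norm_num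
  have hIn : ∀ t < mP, i.1 ≤ (P t).1 ∧ i.2 ≤ (P t).2 ∧ (P t).1 ≤ i.1 + 1 := by
    intro t ht
    obtain ⟨a, b, c, d⟩ := hPIn t ht
    rw [hpow] at b
    exact ⟨a, c, b⟩
  obtain ⟨ha, hc, hd⟩ := hIn 0 (by omega)
  by_cases hx : (P 0).1 = i.1
  · refine ⟨P, mP, hPm, Prod.ext hx hPy0, hPUR, hPG, ?_, hPend⟩
    intro t ht
    rw [hpow]
    exact hIn t ht
  · have hx1 : (P 0).1 = i.1 + 1 := by omega
    refine ⟨fun t => if t = 0 then i else P (t - 1), mP + 1, by omega, by simp, ?_, ?_, ?_, ?_⟩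
    · intro t ht
      by_cases h : t = 0
      · subst h
        left
        simp only [if_pos rfl, if_neg (by omega : ¬ (0+1 = 0))]
        have he : (0:ℕ) + 1 - 1 = 0 := by norm_num
        rw [he]
        refine Prod.ext ?_ ?_ <;> simp [hPy0, hx1]
      · simp only [if_neg h, if_neg (by omega : ¬ (t+1 = 0))]
        have e : t + 1 - 1 = (t-1) + 1 := by omega
        rw [e]
        exact hPUR (t-1) (by omega)
    · intro t ht
      by_cases h : t = 0
      · simp [h, hgood]
      · simp only [if_neg h]
        exact hPG (t-1) (by omega)
    · intro t ht
      by_cases h : t = 0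
      · simp [h]
      · simp only [if_neg h]
        rw [hpow]
        exact hIn (t-1) (by omega)
    · simp only [Nat.add_sub_cancel, if_neg (by omega : ¬ (mP = 0))]
      exact hPend

lemma arm_step1 (ω : V2 → Bool) (i : V2) (k : ℕ) (hk : 1 ≤ k)
    (hcross : HardCrossH ω i (k+1)) (h2 : Arm2 ω i k) : Arm1 ω i (k+1) := by
  obtain ⟨ρ, mρ, hρm, hρ0, hρUR, hρG, hρIn, hρEnd⟩ := h2
  obtain ⟨P, mP, hPm, hPUR, hPG, hPIn', hPx0, hPend⟩ := hcross
  have hIn : ∀ t < mP, i.1 ≤ (P t).1 ∧ (P t).1 ≤ i.1 + 10^(k+1) ∧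
      i.2 ≤ (P t).2 ∧ (P t).2 ≤ i.2 + 10^k := by
    intro t ht
    obtain ⟨a, b, c, d⟩ := hPIn' t ht
    exact ⟨a, b, c, d⟩
  -- Numeric facts
  have hkk : k - 1 + 1 = k := by omega
  have hK1 : (10:ℤ)^k = 10 * 10^(k-1) := by
    conv_lhs => rw [← hkk]
    rw [pow_succ]
    ring
  have hK2 : (10:ℤ)^(k+1) = 10 * 10^k := by rw [pow_succ]; ring
  have hKpos : (1:ℤ) ≤ 10^(k-1) := one_le_pow₀ (by norm_num)
  -- levels of ρ
  have hρlv := lv_from_start hρ0 hρUR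
  have hρlast : mρ - 1 < mρ := by omega
  obtain ⟨hρb1, hρb2, hρb3⟩ := hρIn (mρ - 1) hρlast
  have hρlen : (mρ:ℤ) - 1 = 10^k + ((ρ (mρ-1)).1 - i.1) := by
    have h1 := hρlv (mρ-1) hρlast
    have h2 := hρEnd
    push_cast [Nat.cast_sub (by omega : 1 ≤ mρ)] at h1 ⊢
    omega
  -- start level of P
  obtain ⟨hP0a, hP0b, hP0c, hP0d⟩ := hIn 0 (by omega)
  set cn : ℕ := ((P 0).2 - i.2).toNat with hcn
  have hc : (cn:ℤ) = (P 0).2 - i.2 := Int.toNat_of_nonneg (by omega)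
  have hcK : (cn:ℤ) ≤ 10^k := by omega
  -- levels of P
  have hPlv : ∀ t < mP, (P t).1 + (P t).2 = i.1 + i.2 + cn + t := by
    intro t ht
    have := (shift hPUR 0 t (by omega)).1
    rw [Nat.zero_add] at this
    omega
  -- length of P
  have hPlen : 10^(k+1) ≤ (mP:ℤ) - 1 + cn := by
    have h1 := hPlv (mP-1) (by omega)
    obtain ⟨g1, g2, g3, g4⟩ := hIn (mP-1) (by omega)
    push_cast [Nat.cast_sub (by omega : 1 ≤ mP)] at h1 ⊢
    omega
  -- index bounds
  have hcmρ : cn < mρ := by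
    have : (cn:ℤ) < mρ := by omega
    exact_mod_cast this
  set kw : ℕ := (mρ - 1) - cn with hkw
  have hkw1 : cn + kw = mρ - 1 := by omega
  have hkwz : (kw:ℤ) = (mρ:ℤ) - 1 - cn := by omega
  have hkwP : kw < mP := by
    have : (kw:ℤ) < mP := by omega
    exact_mod_cast this
  -- meeting point
  obtain ⟨ts, hts, hmeet⟩ := meetY hPUR hρUR 0 cn kw (by omega) (by omega)
    (by have := hρlv cn hcmρ
        omega)
    (by have h1 := hρlv cn hcmρ
        have h2 := (hρIn cn hcmρ).1
        omega)
    (by rw [Nat.zero_add, hkw1, hρEnd]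
        exact (hIn kw hkwP).2.2.2)
  rw [Nat.zero_add] at hmeet
  -- glue
  set p := cn + ts with hp
  have hplt : p < mρ := by omega
  have hqlt : ts < mP := by omega
  have heq : ρ p = P ts := hmeet.symm
  obtain ⟨hq1, hq2, hq3, hq4⟩ := hIn ts hqlt
  refine ⟨glue ρ P p ts, p + (mP - ts), by omega, ?_, glue_ur hρUR hPUR hplt hqlt heq,
    glue_good hρG hPG hplt hqlt heq, ?_, ?_⟩
  · rw [glue_left (by omega : 0 ≤ p), hρ0]
  · intro t ht
    simp only [Nat.add_sub_cancel]
    by_cases h : t ≤ p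
    · rw [glue_left h]
      obtain ⟨h1a, h1b, h1c⟩ := hρIn t (by omega)
      have h2 := (mono_from hρUR h hplt).2
      rw [heq] at h2
      exact ⟨h1a, h1b, by omega⟩
    · rw [glue_right heq (by omega)]
      obtain ⟨g1, g2, g3, g4⟩ := hIn (t - p + ts) (by omega)
      exact ⟨g1, g3, g4⟩
  · rw [glue_end hqlt heq]
    exact hPend

lemma arm_step2 (ω : V2 → Bool) (i : V2) (k : ℕ) (hk : 1 ≤ k)
    (hcross : HardCrossV ω i (k+1)) (h1 : Arm1 ω i k) : Arm2 ω i (k+1) := by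
  obtain ⟨ρ, mρ, hρm, hρ0, hρUR, hρG, hρIn, hρEnd⟩ := h1
  obtain ⟨P, mP, hPm, hPUR, hPG, hPIn', hPy0, hPend⟩ := hcross
  have hIn : ∀ t < mP, i.1 ≤ (P t).1 ∧ (P t).1 ≤ i.1 + 10^k ∧
      i.2 ≤ (P t).2 ∧ (P t).2 ≤ i.2 + 10^(k+1) := by
    intro t ht
    obtain ⟨a, b, c, d⟩ := hPIn' t ht
    exact ⟨a, b, c, d⟩
  have hkk : k - 1 + 1 = k := by omega
  have hK1 : (10:ℤ)^k = 10 * 10^(k-1) := by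
    conv_lhs => rw [← hkk]
    rw [pow_succ]
    ring
  have hK2 : (10:ℤ)^(k+1) = 10 * 10^k := by rw [pow_succ]; ring
  have hKpos : (1:ℤ) ≤ 10^(k-1) := one_le_pow₀ (by norm_num)
  have hρlv := lv_from_start hρ0 hρUR
  have hρlast : mρ - 1 < mρ := by omega
  obtain ⟨hρb1, hρb2, hρb3⟩ := hρIn (mρ - 1) hρlast
  have hρlen : (mρ:ℤ) - 1 = 10^k + ((ρ (mρ-1)).2 - i.2) := by
    have h1 := hρlv (mρ-1) hρlast
    have h2 := hρEnd
    push_cast [Nat.cast_sub (by omega : 1 ≤ mρ)] at h1 ⊢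
    omega
  obtain ⟨hP0a, hP0b, hP0c, hP0d⟩ := hIn 0 (by omega)
  set cn : ℕ := ((P 0).1 - i.1).toNat with hcn
  have hc : (cn:ℤ) = (P 0).1 - i.1 := Int.toNat_of_nonneg (by omega)
  have hcK : (cn:ℤ) ≤ 10^k := by omega
  have hPlv : ∀ t < mP, (P t).1 + (P t).2 = i.1 + i.2 + cn + t := by
    intro t ht
    have := (shift hPUR 0 t (by omega)).1
    rw [Nat.zero_add] at this
    omega
  have hPlen : 10^(k+1) ≤ (mP:ℤ) - 1 + cn := by
    have h1 := hPlv (mP-1) (by omega)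
    obtain ⟨g1, g2, g3, g4⟩ := hIn (mP-1) (by omega)
    push_cast [Nat.cast_sub (by omega : 1 ≤ mP)] at h1 ⊢
    omega
  have hcmρ : cn < mρ := by
    have : (cn:ℤ) < mρ := by omega
    exact_mod_cast this
  set kw : ℕ := (mρ - 1) - cn with hkw
  have hkw1 : cn + kw = mρ - 1 := by omega
  have hkwz : (kw:ℤ) = (mρ:ℤ) - 1 - cn := by omega
  have hkwP : kw < mP := by
    have : (kw:ℤ) < mP := by omega
    exact_mod_cast this
  obtain ⟨ts, hts, hmeet⟩ := meetX hPUR hρUR 0 cn kw (by omega) (by omega)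
    (by have := hρlv cn hcmρ
        omega)
    (by have h1 := hρlv cn hcmρ
        have h2 := (hρIn cn hcmρ).2.1
        omega)
    (by rw [Nat.zero_add, hkw1, hρEnd]
        exact (hIn kw hkwP).2.1)
  rw [Nat.zero_add] at hmeet
  set p := cn + ts with hp
  have hplt : p < mρ := by omega
  have hqlt : ts < mP := by omega
  have heq : ρ p = P ts := hmeet.symm
  obtain ⟨hq1, hq2, hq3, hq4⟩ := hIn ts hqlt
  refine ⟨glue ρ P p ts, p + (mP - ts), by omega, ?_, glue_ur hρUR hPUR hplt hqlt heq,
    glue_good hρG hPG hplt hqlt heq, ?_, ?_⟩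
  · rw [glue_left (by omega : 0 ≤ p), hρ0]
  · intro t ht
    simp only [Nat.add_sub_cancel]
    by_cases h : t ≤ p
    · rw [glue_left h]
      obtain ⟨h1a, h1b, h1c⟩ := hρIn t (by omega)
      have h2 := (mono_from hρUR h hplt).1
      rw [heq] at h2
      exact ⟨h1a, h1b, by omega⟩
    · rw [glue_right heq (by omega)]
      obtain ⟨g1, g2, g3, g4⟩ := hIn (t - p + ts) (by omega)
      exact ⟨g1, g3, g2⟩
  · rw [glue_end hqlt heq]
    exact hPend

lemma arms (ω : V2 → Bool) (i : V2) (n : ℕ) (hC : ∀ m, 1 ≤ m → m ≤ n → EventC ω i m) :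
    ∀ k, 1 ≤ k → k ≤ n → Arm1 ω i k ∧ Arm2 ω i k := by
  intro k
  induction k with
  | zero => omega
  | succ k ih =>
    intro _ hkn
    by_cases hk : 1 ≤ k
    · obtain ⟨a1, a2⟩ := ih hk (by omega)
      have hc := hC (k+1) (by omega) hkn
      exact ⟨arm_step1 ω i k hk hc.2.1 a2, arm_step2 ω i k hk hc.2.2 a1⟩
    · have h0 : k = 0 := by omega
      subst h0
      exact ⟨arm1_base ω i (hC 1 le_rfl hkn), arm2_base ω i (hC 1 le_rfl hkn)⟩


lemma sqrt100 (n : ℕ) : Nat.sqrt (100^n) = 10^n := by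
  have h : (100:ℕ)^n = (10^n) ^ 2 := by
    rw [← pow_mul, mul_comm, pow_mul]
    norm_num
  rw [h, Nat.sqrt_eq']

lemma reach_w (ω : V2 → Bool) (i : V2) (n : ℕ) (hn : 1 ≤ n)
    (hA1 : Arm1 ω i n) (hA2 : Arm2 ω i n)
    (w : V2) (hwD : InD i (100^n) w) (hwH : ¬ InH i n w) (hwV : ¬ InV i n w)
    (hBw : ∃ γ m, 1 ≤ m ∧ URSteps γ m ∧ GoodOn ω γ m ∧
      (∃ t : ℕ, t ≤ 10^n ∧ (γ 0 = (i.1 + (t:ℤ), i.2) ∨ γ 0 = (i.1, i.2 + (t:ℤ)))) ∧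
      γ (m-1) = w) :
    ∃ θ : ℕ → V2, θ 0 = i ∧ URSteps θ (10^n + 1) ∧ GoodOn ω θ (10^n + 1) ∧
      (∀ t ≤ 10^n, i.1 ≤ (θ t).1 ∧ i.2 ≤ (θ t).2) ∧ θ (10^n) = w := by
  -- numeric facts
  have hb1 : ((10^n : ℕ) : ℤ) = (10:ℤ)^n := by push_cast; ring
  have hb2 : ((10^(n-1) : ℕ) : ℤ) = (10:ℤ)^(n-1) := by push_cast; ring
  have hkk : n - 1 + 1 = n := by omega
  have hb3 : (10:ℤ)^n = 10 * (10:ℤ)^(n-1) := by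
    conv_lhs => rw [← hkk]
    rw [pow_succ]
    ring
  have hb4 : (1:ℤ) ≤ (10:ℤ)^(n-1) := one_le_pow₀ (by norm_num)
  have hmod : ((10^n : ℕ) : ℤ) % 2 = 0 := by
    have h2 : (2:ℕ) ∣ 10^n := dvd_pow (by norm_num) (by omega)
    obtain ⟨c, hc⟩ := h2
    omega
  -- the endpoint w
  rw [InD, sqrt100 n] at hwD
  obtain ⟨tD, htD, hw⟩ := hwD
  rw [abs_le] at htD
  have hw1 : w.1 = i.1 + ((10^n:ℕ):ℤ)/2 - tD := by rw [hw]
  have hw2 : w.2 = i.2 + ((10^n:ℕ):ℤ)/2 + tD := by rw [hw]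
  have hwsum : w.1 + w.2 = i.1 + i.2 + ((10^n:ℕ):ℤ) := by omega
  have hwx0 : i.1 ≤ w.1 := by omega
  have hwy0 : i.2 ≤ w.2 := by omega
  have hwH' : i.2 + (10:ℤ)^(n-1) < w.2 := by
    by_contra hle
    push_neg at hle
    exact hwH ⟨by omega, by omega, by omega, by omega⟩
  have hwV' : i.1 + (10:ℤ)^(n-1) < w.1 := by
    by_contra hle
    push_neg at hle
    exact hwV ⟨by omega, by omega, by omega, by omega⟩
  -- the B-path
  obtain ⟨γB, mB, hBm, hBUR, hBG, ⟨tB, htB, hB0⟩, hBend⟩ := hBw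
  have hBsum0 : (γB 0).1 + (γB 0).2 = i.1 + i.2 + tB := by
    rcases hB0 with h | h <;> rw [h] <;> ring
  have hBlv : ∀ t < mB, (γB t).1 + (γB t).2 = i.1 + i.2 + tB + t := by
    intro t ht
    have := (shift hBUR 0 t (by omega)).1
    rw [Nat.zero_add] at this
    omega
  have hBlen : (mB:ℤ) - 1 = ((10^n:ℕ):ℤ) - tB := by
    have h1 := hBlv (mB-1) (by omega)
    rw [hBend] at h1
    push_cast [Nat.cast_sub (by omega : 1 ≤ mB)] at h1 ⊢
    omega
  have hbn : tB + (mB - 1) = 10^n := by omega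
  have hBge : ∀ t < mB, i.1 ≤ (γB t).1 ∧ i.2 ≤ (γB t).2 := by
    intro t ht
    have := mono_from hBUR (Nat.zero_le t) ht
    rcases hB0 with h | h <;> rw [h] at this <;>
      exact ⟨by have := this.1; simp at this ⊢; omega,
             by have := this.2; simp at this ⊢; omega⟩
  rcases hB0 with hB0 | hB0
  · -- start on the x-axis: use the horizontal arm
    obtain ⟨ρ, mρ, hρm, hρ0, hρUR, hρG, hρIn, hρEnd⟩ := hA1
    have hρlv := lv_from_start hρ0 hρUR
    have hρlen : ((10^n:ℕ):ℤ) ≤ (mρ:ℤ) - 1 := by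
      have h1 := hρlv (mρ-1) (by omega)
      obtain ⟨u1, u2, u3⟩ := hρIn (mρ-1) (by omega)
      rw [hρEnd] at h1
      push_cast [Nat.cast_sub (by omega : 1 ≤ mρ)] at h1 ⊢
      omega
    have hmρ : 10^n < mρ := by
      have : ((10^n:ℕ):ℤ) < mρ := by omega
      exact_mod_cast this
    obtain ⟨ts, hts, hmeet⟩ := meetX hBUR hρUR 0 tB (mB - 1) (by omega) (by omega)
      (by have h1 := hρlv tB (by omega)
          rw [hB0]
          simp only
          omega)
      (by obtain ⟨u1, u2, u3⟩ := hρIn tB (by omega)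
          have h1 := hρlv tB (by omega)
          rw [hB0]
          simp only
          omega)
      (by rw [Nat.zero_add, show tB + (mB - 1) = 10^n from hbn, hBend]
          obtain ⟨u1, u2, u3⟩ := hρIn (10^n) hmρ
          have h1 := hρlv (10^n) hmρ
          omega)
    rw [Nat.zero_add] at hmeet
    set p := tB + ts with hp
    have hplt : p < mρ := by omega
    have hqlt : ts < mB := by omega
    have heq : ρ p = γB ts := hmeet.symm
    have hm1 : p + (mB - ts) = 10^n + 1 := by omega
    refine ⟨glue ρ γB p ts, ?_, ?_, ?_, ?_, ?_⟩
    · rw [glue_left (by omega : 0 ≤ p), hρ0]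
    · rw [← hm1]; exact glue_ur hρUR hBUR hplt hqlt heq
    · rw [← hm1]; exact glue_good hρG hBG hplt hqlt heq
    · intro t ht
      by_cases h : t ≤ p
      · rw [glue_left h]
        obtain ⟨u1, u2, u3⟩ := hρIn t (by omega)
        exact ⟨u1, u2⟩
      · rw [glue_right heq (by omega)]
        exact hBge (t - p + ts) (by omega)
    · have : (10:ℕ)^n = p + (mB - ts) - 1 := by omega
      rw [this, glue_end hqlt heq, hBend]
  · -- start on the y-axis: use the vertical arm
    obtain ⟨ρ, mρ, hρm, hρ0, hρUR, hρG, hρIn, hρEnd⟩ := hA2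
    have hρlv := lv_from_start hρ0 hρUR
    have hρlen : ((10^n:ℕ):ℤ) ≤ (mρ:ℤ) - 1 := by
      have h1 := hρlv (mρ-1) (by omega)
      obtain ⟨u1, u2, u3⟩ := hρIn (mρ-1) (by omega)
      rw [hρEnd] at h1
      push_cast [Nat.cast_sub (by omega : 1 ≤ mρ)] at h1 ⊢
      omega
    have hmρ : 10^n < mρ := by
      have : ((10^n:ℕ):ℤ) < mρ := by omega
      exact_mod_cast this
    obtain ⟨ts, hts, hmeet⟩ := meetY hBUR hρUR 0 tB (mB - 1) (by omega) (by omega)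
      (by have h1 := hρlv tB (by omega)
          rw [hB0]
          simp only
          omega)
      (by obtain ⟨u1, u2, u3⟩ := hρIn tB (by omega)
          have h1 := hρlv tB (by omega)
          rw [hB0]
          simp only
          omega)
      (by rw [Nat.zero_add, show tB + (mB - 1) = 10^n from hbn, hBend]
          obtain ⟨u1, u2, u3⟩ := hρIn (10^n) hmρ
          have h1 := hρlv (10^n) hmρ
          omega)
    rw [Nat.zero_add] at hmeet
    set p := tB + ts with hp
    have hplt : p < mρ := by omega
    have hqlt : ts < mB := by omega
    have heq : ρ p = γB ts := hmeet.symm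
    have hm1 : p + (mB - ts) = 10^n + 1 := by omega
    refine ⟨glue ρ γB p ts, ?_, ?_, ?_, ?_, ?_⟩
    · rw [glue_left (by omega : 0 ≤ p), hρ0]
    · rw [← hm1]; exact glue_ur hρUR hBUR hplt hqlt heq
    · rw [← hm1]; exact glue_good hρG hBG hplt hqlt heq
    · intro t ht
      by_cases h : t ≤ p
      · rw [glue_left h]
        obtain ⟨u1, u2, u3⟩ := hρIn t (by omega)
        exact ⟨u1, u2⟩
      · rw [glue_right heq (by omega)]
        exact hBge (t - p + ts) (by omega)
    · have : (10:ℕ)^n = p + (mB - ts) - 1 := by omega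
      rw [this, glue_end hqlt heq, hBend]


lemma focus_wit (i v : V2) (Z K : ℕ) (hx : i.1 ≤ v.1) (hy : i.2 ≤ v.2)
    (h1 : (v.1 - i.1) - (v.2 - i.2) ≤ (Z:ℤ)) (h2 : (v.2 - i.2) - (v.1 - i.1) ≤ (Z:ℤ))
    (hZK : Z ≤ K) :
    ∃ s : ℕ, d1 v (i.1 + (s:ℤ), i.2 + (s:ℤ)) ≤ K := by
  refine ⟨(min (v.1 - i.1) (v.2 - i.2)).toNat, ?_⟩
  simp only [d1]
  rcases le_total (v.1 - i.1) (v.2 - i.2) with h | h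
  · rw [min_eq_left h]
    omega
  · rw [min_eq_right h]
    omega


end GF

/-- Lemma 3.1 (existence of a good family of paths): for any good/bad labelling `ω` of `ℤ²`
and any vertex `i`, if the events `A`, `B` and `C_m` for every `m ∈ {1,…,n}` all occur
(with `N = 100^n`), then there exists a good family of paths for `i`. -/
theorem good_family_of_events (ω : V2 → Bool) (i : V2) (n : ℕ)
    (hA : EventA ω i (100 ^ n)) (hB : EventB ω i n)
    (hC : ∀ m : ℕ, 1 ≤ m → m ≤ n → EventC ω i m) :
    GoodFamilyP ω (100 ^ n) i := by
  classical
  obtain ⟨M, Γ, ms, hM, hAp, hdisj⟩ := hA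
  rw [GF.sqrt100] at hM
  rcases Nat.eq_zero_or_pos n with hn0 | hn1
  ·
    subst hn0
    exfalso
    have hM2 : 0 < M := by norm_num at hM; omega
    set a : Fin M := ⟨0, hM2⟩
    obtain ⟨hms, hUR, hG, hInR, hD0, hD1⟩ := hAp a
    obtain ⟨t, ht, hv⟩ := hD0
    have hs : ((Nat.sqrt (100^0) : ℕ) : ℤ) = 1 := by rw [GF.sqrt100]; norm_num
    have ht' := abs_le.mp ht
    obtain ⟨r1, r2, r3⟩ := hInR 0 (by omega)
    have e1 : (Γ a 0).1 = i.1 + ((Nat.sqrt (100^0):ℕ):ℤ)/2 - t := by rw [hv]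
    have e2 : (Γ a 0).2 = i.2 + ((Nat.sqrt (100^0):ℕ):ℤ)/2 + t := by rw [hv]
    omega
  · obtain ⟨W, hW1, hW2, hW3⟩ := hB
    -- numeric facts
    have hsq : Nat.sqrt (100^n) = 10^n := GF.sqrt100 n
    have hmod : ((10^n : ℕ) : ℤ) % 2 = 0 := by
      have h2 : (2:ℕ) ∣ 10^n := dvd_pow (by norm_num) (by omega)
      obtain ⟨c, hc⟩ := h2
      omega
    have hSbig : 10 ≤ 10^n := by
      calc (10:ℕ) = 10^1 := (pow_one 10).symm
      _ ≤ 10^n := Nat.pow_le_pow_right (by norm_num) hn1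
    have hNS : 10^n ≤ 100^n := Nat.pow_le_pow_left (by norm_num) n
    -- all A-paths have length exactly 4N+1
    have hlen : ∀ a : Fin M, ms a = 4 * 100^n + 1 := by
      intro a
      obtain ⟨hms, hUR, hG, hInR, hD0, hD1⟩ := hAp a
      rw [InD, hsq] at hD0 hD1
      obtain ⟨t0, ht0, hv0⟩ := hD0
      obtain ⟨t1, ht1, hv1⟩ := hD1
      have e1 : (Γ a 0).1 = i.1 + ((10^n:ℕ):ℤ)/2 - t0 := by rw [hv0]
      have e2 : (Γ a 0).2 = i.2 + ((10^n:ℕ):ℤ)/2 + t0 := by rw [hv0]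
      have e3 : (Γ a (ms a - 1)).1 = i.1 + 2 * (100^n:ℕ) + ((10^n:ℕ):ℤ)/2 - t1 := by rw [hv1]
      have e4 : (Γ a (ms a - 1)).2 = i.2 + 2 * (100^n:ℕ) + ((10^n:ℕ):ℤ)/2 + t1 := by rw [hv1]
      have hs01 := (GF.shift hUR 0 (ms a - 1) (by omega)).1
      rw [Nat.zero_add] at hs01
      have hcast : ((ms a - 1 : ℕ) : ℤ) = (ms a : ℤ) - 1 := by
        push_cast [Nat.cast_sub hms]
        ring
      omega
    -- the diagonal as a finite set
    set DF : Finset V2 := (Finset.Icc (0:ℤ) ((10^n : ℕ):ℤ)).image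
        (fun u => ((i.1 + u, i.2 + ((10^n:ℕ):ℤ) - u) : V2)) with hDFdef
    have hDFmem : ∀ v : V2, InD i (100^n) v → v ∈ DF := by
      intro v hv
      rw [InD, hsq] at hv
      obtain ⟨t0, ht0, hveq⟩ := hv
      have ht0' := abs_le.mp ht0
      refine Finset.mem_image.mpr ⟨((10^n:ℕ):ℤ)/2 - t0, Finset.mem_Icc.mpr ⟨by omega, by omega⟩, ?_⟩
      rw [hveq, Prod.mk.injEq]
      constructor <;> omega
    have hDFcard : DF.card ≤ 10^n + 1 := by
      refine le_trans (Finset.card_image_le) ?_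
      rw [Int.card_Icc]
      omega
    -- starting points of the A-paths
    set T : Finset V2 := Finset.image (fun a : Fin M => Γ a 0) Finset.univ with hTdef
    have hMT : M ≤ 2 * T.card := by
      have hfib : ∀ v ∈ Finset.univ.image (fun a : Fin M => Γ a 0),
          (Finset.univ.filter (fun x : Fin M => Γ x 0 = v)).card ≤ 2 := by
        intro v hv
        by_contra hgt
        push_neg at hgt
        obtain ⟨x, y, z, hx, hy, hz, hxy, hxz, hyz⟩ := Finset.two_lt_card_iff.mp hgt
        simp only [Finset.mem_filter] at hx hy hz
        have hpair : ∀ p q : Fin M, p ≠ q → Γ p 0 = Γ q 0 → Γ p 1 = Γ q 1 → False := by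
          intro p q hpq h0 h1
          exact hdisj p q hpq 0 0 (by rw [hlen p]; omega) (by rw [hlen q]; omega) ⟨h0, h1⟩
        have sx := (hAp x).2.1 0 (by rw [hlen x]; omega)
        have sy := (hAp y).2.1 0 (by rw [hlen y]; omega)
        have sz := (hAp z).2.1 0 (by rw [hlen z]; omega)
        simp only [Nat.zero_add] at sx sy sz
        rcases sx with sx|sx <;> rcases sy with sy|sy <;> rcases sz with sz|sz <;>
          first
          | (have hst : Γ x 1 = Γ y 1 := by rw [sx, sy, hx.2, hy.2]
             exact hpair x y hxy (hx.2.trans hy.2.symm) hst)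
          | (have hst : Γ x 1 = Γ z 1 := by rw [sx, sz, hx.2, hz.2]
             exact hpair x z hxz (hx.2.trans hz.2.symm) hst)
          | (have hst : Γ y 1 = Γ z 1 := by rw [sy, sz, hy.2, hz.2]
             exact hpair y z hyz (hy.2.trans hz.2.symm) hst)
      have := Finset.card_le_mul_card_image (f := fun a : Fin M => Γ a 0) Finset.univ 2 hfib
      simpa using this
    have hWDF : ∀ v ∈ W, v ∈ DF := fun v hv => hDFmem v (hW1 v hv).1
    have hTDF : ∀ v ∈ T, v ∈ DF := by
      intro v hv
      obtain ⟨a, -, ha⟩ := Finset.mem_image.mp hv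
      exact hDFmem v (ha ▸ (hAp a).2.2.2.2.1)
    set W' := W ∩ T with hW'def
    have hcount : 10^n ≤ 2 * W'.card := by
      have c2 : T ⊆ W' ∪ (T \ W) := by
        intro v hv
        by_cases h : v ∈ W
        · exact Finset.mem_union_left _ (Finset.mem_inter.mpr ⟨h, hv⟩)
        · exact Finset.mem_union_right _ (Finset.mem_sdiff.mpr ⟨hv, h⟩)
      have c2' : T.card ≤ W'.card + (T \ W).card :=
        le_trans (Finset.card_le_card c2) (Finset.card_union_le _ _)
      have c3 : (T \ W).card + W.card ≤ 10^n + 1 := by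
        have hsub : (T \ W) ∪ W ⊆ DF := by
          intro v hv
          rcases Finset.mem_union.mp hv with h | h
          · exact hTDF v (Finset.mem_sdiff.mp h).1
          · exact hWDF v h
        calc (T \ W).card + W.card = ((T \ W) ∪ W).card :=
              (Finset.card_union_of_disjoint Finset.sdiff_disjoint).symm
          _ ≤ DF.card := Finset.card_le_card hsub
          _ ≤ 10^n + 1 := hDFcard
      omega
    -- the two arms
    obtain ⟨harm1, harm2⟩ := GF.arms ω i n hC n hn1 le_rfl
    -- build one family path for each w ∈ W'
    have hbuild : ∀ w ∈ W', ∃ (θ : ℕ → V2) (a : Fin M),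
        Γ a 0 = w ∧ θ 0 = i ∧ URSteps θ (2 * 100^n) ∧ GoodOn ω θ (2 * 100^n) ∧
        Focused θ (2 * 100^n) i ∧ (∀ t, t ≤ 10^n → i.1 ≤ (θ t).1 ∧ i.2 ≤ (θ t).2) ∧
        (∀ t, 10^n ≤ t → θ t = Γ a (t - 10^n)) := by
      intro w hw
      obtain ⟨hwW, hwT⟩ := Finset.mem_inter.mp hw
      obtain ⟨a, -, ha⟩ := Finset.mem_image.mp hwT
      obtain ⟨hwD, hwH, hwV⟩ := hW1 w hwW
      obtain ⟨θ1, hθ0, hθUR, hθG, hθge, hθend⟩ :=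
        GF.reach_w ω i n hn1 harm1 harm2 w hwD hwH hwV (hW3 w hwW)
      obtain ⟨hms, hUR, hG, hInR, hD0, hD1⟩ := hAp a
      have heq : θ1 (10^n) = Γ a 0 := by rw [hθend, ha]
      have hp : 10^n < 10^n + 1 := by omega
      have hURθ := GF.glue_ur hθUR hUR hp hms heq
      have hGθ := GF.glue_good hθG hG hp hms heq
      have hlenbig : 2 * 100^n ≤ 10^n + (ms a - 0) := by rw [hlen a]; omega
      have htail : ∀ t, 10^n ≤ t → GF.glue θ1 (Γ a) (10^n) 0 t = Γ a (t - 10^n) := by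
        intro t ht
        have h := GF.glue_right heq ht
        rw [Nat.add_zero] at h
        exact h
      have hsq2 : 10^n ≤ Nat.sqrt (2 * 100^n) := by
        rw [← hsq]
        exact Nat.sqrt_le_sqrt (by omega)
      refine ⟨GF.glue θ1 (Γ a) (10^n) 0, a, ha, ?_, GF.ur_mono hURθ hlenbig,
        fun t ht => hGθ t (by omega), ?_, ?_, htail⟩
      · rw [GF.glue_left (Nat.zero_le _)]
        exact hθ0
      · -- Focused
        intro t ht
        by_cases h : t ≤ 10^n
        · rw [GF.glue_left h]
          have hge := hθge t h
          have hlv := GF.lv_from_start hθ0 hθUR t (by omega)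
          exact GF.focus_wit i (θ1 t) (10^n) _ hge.1 hge.2 (by omega) (by omega) hsq2
        · rw [htail t (by omega)]
          obtain ⟨r1, r2, r3⟩ := hInR (t - 10^n) (by rw [hlen a]; omega)
          have hr3 := abs_le.mp r3
          rw [hsq] at r1 hr3
          exact GF.focus_wit i (Γ a (t - 10^n)) (10^n) _ (by omega) (by omega)
            (by omega) (by omega) hsq2
      · intro t ht
        rw [GF.glue_left ht]
        exact hθge t ht
    choose θf af hfa hf0 hfUR hfG hfF hfge hftail using hbuild
    -- enumerate W'
    set wfun : Fin W'.card → V2 := fun j => ((W'.equivFin.symm j : W') : V2) with hwfun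
    have hwmem : ∀ j, wfun j ∈ W' := fun j => (W'.equivFin.symm j).2
    have hwinj : Function.Injective wfun := by
      intro a b hab
      have : W'.equivFin.symm a = W'.equivFin.symm b := Subtype.ext hab
      exact W'.equivFin.symm.injective this
    refine ⟨W'.card, fun j => θf (wfun j) (hwmem j), by rw [hsq]; omega, ?_, ?_⟩
    · intro j
      exact ⟨⟨hf0 _ (hwmem j), hfUR _ (hwmem j)⟩, hfG _ (hwmem j), hfF _ (hwmem j)⟩
    · intro a b hab t t' ht ht' he1 he2
      have hma := hwmem a
      have hmb := hwmem b
      have he1' : θf (wfun a) (hwmem a) t = θf (wfun b) (hwmem b) t' := he1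
      have he2' : θf (wfun a) (hwmem a) (t+1) = θf (wfun b) (hwmem b) (t'+1) := he2
      have hlva := GF.lv_from_start (hf0 _ hma) (hfUR _ hma) t (by omega)
      have hlvb := GF.lv_from_start (hf0 _ hmb) (hfUR _ hmb) t' (by omega)
      rw [he1'] at hlva
      have htt : t = t' := by omega
      subst htt
      by_cases h : t ≤ 10^n
      · have hge := hfge _ hma t h
        have hlva' := GF.lv_from_start (hf0 _ hma) (hfUR _ hma) t (by omega)
        show d1 (θf (wfun a) (hwmem a) t) i ≤ Nat.sqrt (100^n)
        rw [GF.sqrt100]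
        simp only [d1]
        omega
      · exfalso
        have hane : af (wfun a) (hwmem a) ≠ af (wfun b) (hwmem b) := by
          intro hEq
          apply hab
          apply hwinj
          rw [← hfa _ hma, ← hfa _ hmb, hEq]
        refine hdisj _ _ hane (t - 10^n) (t - 10^n) (by rw [hlen]; omega)
          (by rw [hlen]; omega) ⟨?_, ?_⟩
        · rw [← hftail _ hma t (by omega), ← hftail _ hmb t (by omega)]
          exact he1'
        · have e : (t - 10^n) + 1 = (t + 1) - 10^n := by omega
          rw [e, ← hftail _ hma (t+1) (by omega), ← hftail _ hmb (t+1) (by omega)]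
          exact he2'
end

section
/- Observation (bootstrap closure is invariant under legal exchanges): Fix a configuration η ∈ Ω_Λ, a set V ⊆ Λ, and nearest-neighbour sites y, z ∈ V such that the KA-kf constraint c_{yz} is satisfied in V (i.e. computed with all sites outside V set to occupied, each of y and z has at least k−1 empty nearest neighbours in V other than y, z). Then [A_η]^V = [A_{η^{yz}}]^V, where η^{yz} is η with the values at y and z exchanged. -/
open Finset

/-- Sites of the `d`-dimensional integer lattice. -/
abbrev Zd (d : ℕ) := Fin d → ℤ

/-- ℓ¹-distance on `ℤ^d`. -/
def dist1 {d : ℕ} (x y : Zd d) : ℕ := ∑ i, (x i - y i).natAbs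

/-- The `2d` nearest neighbours of a site. -/
def nbrs {d : ℕ} (x : Zd d) : Finset (Zd d) :=
  Finset.image (fun p : Fin d × Bool =>
    Function.update x p.1 (x p.1 + if p.2 then 1 else -1)) Finset.univ

/-- The box `Λ = [L]^d = {1,…,L}^d`. -/
noncomputable def lamSet (d L : ℕ) : Finset (Zd d) := Fintype.piFinset fun _ => Finset.Icc (1 : ℤ) (L : ℤ)

/-- The boundary `∂Λ`: sites of `Λ` having a nearest neighbour outside `Λ`. -/
noncomputable def bdry (d L : ℕ) : Finset (Zd d) := (lamSet d L).filter fun x => ∃ y ∈ nbrs x, y ∉ lamSet d L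

/-- The configuration `η^{xy}` obtained by exchanging the occupation values at `x` and `y`.
Configurations are encoded by the finite set of occupied sites. -/
def swapC {d : ℕ} (A : Finset (Zd d)) (x y : Zd d) : Finset (Zd d) :=
  if x ∈ A ∧ y ∉ A then insert y (A.erase x)
  else if y ∈ A ∧ x ∉ A then insert x (A.erase y)
  else A

/-- The KA-`k`f kinetic constraint `c_{xy}`: each of `x`, `y` has at least `k-1` empty
nearest neighbours other than `x,y` (sites not in `A` are empty). -/
def cxy (d k : ℕ) (x y : Zd d) (A : Finset (Zd d)) : Prop :=
  k - 1 ≤ ((nbrs x).filter fun z => z ≠ y ∧ z ∉ A).card ∧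
  k - 1 ≤ ((nbrs y).filter fun z => z ≠ x ∧ z ∉ A).card

/-- Real-valued indicator of a proposition. -/
noncomputable def ind (P : Prop) : ℝ := by classical exact if P then 1 else 0

/-- Bernoulli(1-q) product weight of the configuration with occupied set `A ⊆ Λ`. -/
noncomputable def kaWt (d L : ℕ) (q : ℝ) (A : Finset (Zd d)) : ℝ :=
  (1 - q) ^ A.card * q ^ ((lamSet d L).card - A.card)

/-- Expectation with respect to the product measure `μ` on `Ω_Λ`. -/
noncomputable def kaEx (d L : ℕ) (q : ℝ) (f : Finset (Zd d) → ℝ) : ℝ :=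
  ∑ A ∈ (lamSet d L).powerset, kaWt d L q A * f A

/-- Variance with respect to `μ`. -/
noncomputable def kaVar (d L : ℕ) (q : ℝ) (f : Finset (Zd d) → ℝ) : ℝ :=
  kaEx d L q fun A => (f A - kaEx d L q f) ^ 2

/-- The Dirichlet form of the KA-`k`f model in `Λ` with boundary sources:
`D(f) = Σ_{x,y∈Λ, ‖x-y‖₁=1} μ(c_{xy} (∇_{xy}f)²) + Σ_{x∈∂Λ} μ(Var_x(f))`. -/
noncomputable def kaDir (d k L : ℕ) (q : ℝ) (f : Finset (Zd d) → ℝ) : ℝ :=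
  (∑ x ∈ lamSet d L, ∑ y ∈ (lamSet d L).filter (fun y => dist1 x y = 1),
    kaEx d L q fun A => ind (cxy d k x y A) * (f (swapC A x y) - f A) ^ 2)
  + ∑ x ∈ bdry d L, kaEx d L q fun A => (1 - q) * q * (f (insert x A) - f (A.erase x)) ^ 2

/-- `r`-times iterated exponential. -/
noncomputable def iterExp : ℕ → ℝ → ℝ
  | 0, x => x
  | n + 1, x => Real.exp (iterExp n x)

/-- One step of `k`-neighbour bootstrap percolation in `V`: add the sites of `V` having at
least `k` nearest neighbours in the current set. -/
def bootStep (d k : ℕ) (V : Set (Zd d)) (S : Set (Zd d)) : Set (Zd d) :=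
  S ∪ {x | x ∈ V ∧ k ≤ Set.ncard {z | z ∈ nbrs x ∧ z ∈ S}}

/-- The `k`-neighbour bootstrap percolation closure `[A]^V` in `V` starting at `A`. -/
def bootCl (d k : ℕ) (V A : Set (Zd d)) : Set (Zd d) :=
  ⋃ t : ℕ, (bootStep d k V)^[t] (A ∩ V)

/-- The set `A_η` of empty sites in `Λ = [L]^d` of the configuration with occupied set `A`. -/
def emptiesOf (d L : ℕ) (A : Finset (Zd d)) : Set (Zd d) :=
  {x | x ∈ lamSet d L ∧ x ∉ A}

section AuxBoot

lemma dist1_comm {d : ℕ} (x y : Zd d) : dist1 x y = dist1 y x := by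
  unfold dist1
  refine Finset.sum_congr rfl fun i _ => ?_
  omega

lemma dist1_ne {d : ℕ} {x y : Zd d} (h : dist1 x y = 1) : x ≠ y := by
  intro he
  subst he
  simp [dist1] at h

lemma mem_nbrs_of_dist1 {d : ℕ} {y z : Zd d} (h : dist1 y z = 1) : y ∈ nbrs z := by
  unfold dist1 at h
  have hex : ∃ j, (y j - z j).natAbs ≠ 0 := by
    by_contra hc
    push_neg at hc
    simp [hc] at h
  obtain ⟨j, hj⟩ := hex
  have hsum := Finset.add_sum_erase Finset.univ (fun i => (y i - z i).natAbs)
    (Finset.mem_univ j)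
  rw [← hsum] at h
  have h1 : (y j - z j).natAbs = 1 ∧
      ∑ i ∈ Finset.univ.erase j, (y i - z i).natAbs = 0 := by
    beta_reduce at h
    constructor <;> omega
  have hrest : ∀ i, i ≠ j → y i = z i := by
    intro i hi
    have h0 := Finset.sum_eq_zero_iff.mp h1.2 i (Finset.mem_erase.mpr ⟨hi, Finset.mem_univ i⟩)
    omega
  have hj1 : y j = z j + 1 ∨ y j = z j + (-1) := by
    have := h1.1; omega
  unfold nbrs
  rcases hj1 with hj1 | hj1
  · refine Finset.mem_image.mpr ⟨(j, true), Finset.mem_univ _, ?_⟩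
    funext i
    by_cases hi : i = j
    · subst hi; simp [Function.update_self, hj1]
    · simp [Function.update_of_ne hi, hrest i hi]
  · refine Finset.mem_image.mpr ⟨(j, false), Finset.mem_univ _, ?_⟩
    funext i
    by_cases hi : i = j
    · subst hi; simp [Function.update_self, hj1]
    · simp [Function.update_of_ne hi, hrest i hi]

lemma not_mem_nbrs_self {d : ℕ} (x : Zd d) : x ∉ nbrs x := by
  unfold nbrs
  simp only [Finset.mem_image, Finset.mem_univ, true_and]
  rintro ⟨⟨j, b⟩, hb⟩
  have hj := congrFun hb j
  simp only [Function.update_self] at hj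
  cases b <;> simp at hj <;> omega

lemma nbrs_inter_finite {d : ℕ} (x : Zd d) (S : Set (Zd d)) :
    {w : Zd d | w ∈ nbrs x ∧ w ∈ S}.Finite :=
  (nbrs x).finite_toSet.subset fun w hw => hw.1

lemma bootStep_mono {d k : ℕ} {V S T : Set (Zd d)} (h : S ⊆ T) :
    bootStep d k V S ⊆ bootStep d k V T := by
  intro x hx
  rcases hx with hx | hx
  · exact Or.inl (h hx)
  · refine Or.inr ⟨hx.1, le_trans hx.2 ?_⟩
    exact Set.ncard_le_ncard (fun w hw => ⟨hw.1, h hw.2⟩) (nbrs_inter_finite x T)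

lemma subset_bootStep {d k : ℕ} (V S : Set (Zd d)) : S ⊆ bootStep d k V S :=
  Set.subset_union_left

lemma iter_bootStep_mono {d k : ℕ} (V B : Set (Zd d)) :
    Monotone (fun t => (bootStep d k V)^[t] B) := by
  apply monotone_nat_of_le_succ
  intro t
  rw [Function.iterate_succ_apply']
  exact subset_bootStep V _

lemma iterate_subset_bootCl {d k : ℕ} (V A : Set (Zd d)) (t : ℕ) :
    (bootStep d k V)^[t] (A ∩ V) ⊆ bootCl d k V A :=
  Set.subset_iUnion (fun t => (bootStep d k V)^[t] (A ∩ V)) t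

lemma bootStep_bootCl_subset {d k : ℕ} (V A : Set (Zd d)) :
    bootStep d k V (bootCl d k V A) ⊆ bootCl d k V A := by
  classical
  intro x hx
  rcases hx with hx | hx
  · exact hx
  · obtain ⟨hxV, hxk⟩ := hx
    set N := {w : Zd d | w ∈ nbrs x ∧ w ∈ bootCl d k V A} with hN
    have hNfin : N.Finite := nbrs_inter_finite x _
    have hmem : ∀ w ∈ N, ∃ t, w ∈ (bootStep d k V)^[t] (A ∩ V) := by
      intro w hw
      exact Set.mem_iUnion.mp hw.2
    choose! g hg using hmem
    set T := hNfin.toFinset.sup g with hT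
    have hsub : N ⊆ {w : Zd d | w ∈ nbrs x ∧ w ∈ (bootStep d k V)^[T] (A ∩ V)} := by
      intro w hw
      refine ⟨hw.1, ?_⟩
      have hgw : g w ≤ T := Finset.le_sup (hNfin.mem_toFinset.mpr hw)
      exact iter_bootStep_mono V (A ∩ V) hgw (hg w hw)
    have hk' : k ≤ Set.ncard {w : Zd d | w ∈ nbrs x ∧ w ∈ (bootStep d k V)^[T] (A ∩ V)} :=
      le_trans hxk (Set.ncard_le_ncard hsub (nbrs_inter_finite x _))
    have : x ∈ (bootStep d k V)^[T + 1] (A ∩ V) := by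
      rw [Function.iterate_succ_apply']
      exact Or.inr ⟨hxV, hk'⟩
    exact iterate_subset_bootCl V A (T + 1) this

lemma bootCl_subset {d k : ℕ} {V A T : Set (Zd d)} (h0 : A ∩ V ⊆ T)
    (hT : bootStep d k V T ⊆ T) : bootCl d k V A ⊆ T := by
  apply Set.iUnion_subset
  intro t
  induction t with
  | zero => simpa using h0
  | succ t ih =>
    rw [Function.iterate_succ_apply']
    exact (bootStep_mono ih).trans hT

lemma mem_bootCl_of_mem {d k : ℕ} {V A : Set (Zd d)} {x : Zd d} (h : x ∈ A ∩ V) :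
    x ∈ bootCl d k V A := iterate_subset_bootCl V A 0 h

/-- The key one-sided case: `y` occupied, `z` empty. -/
lemma swap_case {d k L : ℕ} (hk2 : 2 ≤ k)
    (A : Finset (Zd d)) (V : Set (Zd d)) (hV : V ⊆ ↑(lamSet d L))
    (y z : Zd d) (hy : y ∈ V) (hz : z ∈ V) (hyz : dist1 y z = 1)
    (hcy : k - 1 ≤ Set.ncard {w | w ∈ nbrs y ∧ w ∈ V ∧ w ≠ z ∧ w ∉ A})
    (hcz : k - 1 ≤ Set.ncard {w | w ∈ nbrs z ∧ w ∈ V ∧ w ≠ y ∧ w ∉ A})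
    (hyA : y ∈ A) (hzA : z ∉ A) :
    bootCl d k V (emptiesOf d L A) =
      bootCl d k V (emptiesOf d L (insert z (A.erase y))) := by
  classical
  set A' : Finset (Zd d) := insert z (A.erase y) with hA'
  set B : Set (Zd d) := emptiesOf d L A with hB
  set B' : Set (Zd d) := emptiesOf d L A' with hB'
  have hne : y ≠ z := dist1_ne hyz
  have hyΛ : y ∈ lamSet d L := hV hy
  have hzΛ : z ∈ lamSet d L := hV hz
  have hzB : z ∈ B ∩ V := ⟨⟨hzΛ, hzA⟩, hz⟩
  have hyA' : y ∉ A' := by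
    simp [hA', hne, Finset.mem_erase]
  have hzA' : z ∈ A' := Finset.mem_insert_self z _
  have hyB' : y ∈ B' ∩ V := ⟨⟨hyΛ, hyA'⟩, hy⟩
  have hznbr : z ∈ nbrs y := mem_nbrs_of_dist1 (dist1_comm y z ▸ hyz)
  have hynbr : y ∈ nbrs z := mem_nbrs_of_dist1 hyz
  -- y is in the closure of B
  have hyCl : y ∈ bootCl d k V B := by
    set W : Set (Zd d) := {w | w ∈ nbrs y ∧ w ∈ V ∧ w ≠ z ∧ w ∉ A} with hW
    have hWfin : W.Finite := (nbrs y).finite_toSet.subset fun w hw => hw.1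
    have hzW : z ∉ W := fun hzw => hzw.2.2.1 rfl
    have hins : insert z W ⊆ {w : Zd d | w ∈ nbrs y ∧ w ∈ B ∩ V} := by
      intro w hw
      rcases hw with hw | hw
      · subst hw; exact ⟨hznbr, hzB⟩
      · exact ⟨hw.1, ⟨hV hw.2.1, hw.2.2.2⟩, hw.2.1⟩
    have hcard : k ≤ (insert z W).ncard := by
      rw [Set.ncard_insert_of_notMem hzW hWfin]
      omega
    have hk' : k ≤ Set.ncard {w : Zd d | w ∈ nbrs y ∧ w ∈ B ∩ V} :=
      le_trans hcard (Set.ncard_le_ncard hins (nbrs_inter_finite y _))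
    have : y ∈ (bootStep d k V)^[1] (B ∩ V) := Or.inr ⟨hy, hk'⟩
    exact iterate_subset_bootCl V B 1 this
  -- z is in the closure of B'
  have hzCl : z ∈ bootCl d k V B' := by
    set W : Set (Zd d) := {w | w ∈ nbrs z ∧ w ∈ V ∧ w ≠ y ∧ w ∉ A} with hW
    have hWfin : W.Finite := (nbrs z).finite_toSet.subset fun w hw => hw.1
    have hyW : y ∉ W := fun hyw => hyw.2.2.1 rfl
    have hins : insert y W ⊆ {w : Zd d | w ∈ nbrs z ∧ w ∈ B' ∩ V} := by
      intro w hw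
      rcases hw with hw | hw
      · subst hw; exact ⟨hynbr, hyB'⟩
      · refine ⟨hw.1, ⟨hV hw.2.1, ?_⟩, hw.2.1⟩
        intro hwA'
        rcases Finset.mem_insert.mp hwA' with h1 | h1
        · exact not_mem_nbrs_self z (h1 ▸ hw.1)
        · exact hw.2.2.2 (Finset.mem_of_mem_erase h1)
    have hcard : k ≤ (insert y W).ncard := by
      rw [Set.ncard_insert_of_notMem hyW hWfin]
      omega
    have hk' : k ≤ Set.ncard {w : Zd d | w ∈ nbrs z ∧ w ∈ B' ∩ V} :=
      le_trans hcard (Set.ncard_le_ncard hins (nbrs_inter_finite z _))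
    have : z ∈ (bootStep d k V)^[1] (B' ∩ V) := Or.inr ⟨hz, hk'⟩
    exact iterate_subset_bootCl V B' 1 this
  apply Set.Subset.antisymm
  · apply bootCl_subset _ (bootStep_bootCl_subset V B')
    rintro x ⟨⟨hxΛ, hxA⟩, hxV⟩
    by_cases hxz : x = z
    · exact hxz ▸ hzCl
    · apply mem_bootCl_of_mem
      refine ⟨⟨hxΛ, ?_⟩, hxV⟩
      intro hxA'
      rcases Finset.mem_insert.mp hxA' with h1 | h1
      · exact hxz h1
      · exact hxA (Finset.mem_of_mem_erase h1)
  · apply bootCl_subset _ (bootStep_bootCl_subset V B)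
    rintro x ⟨⟨hxΛ, hxA'⟩, hxV⟩
    by_cases hxy : x = y
    · exact hxy ▸ hyCl
    · apply mem_bootCl_of_mem
      refine ⟨⟨hxΛ, ?_⟩, hxV⟩
      intro hxA
      exact hxA' (Finset.mem_insert_of_mem (Finset.mem_erase.mpr ⟨hxy, hxA⟩))

end AuxBoot

/-- Observation 5.4 (bootstrap closure is invariant under legal exchanges): if `y,z ∈ V`
are nearest neighbours and the KA-`k`f constraint `c_{yz}` is satisfied in `V` (sites
outside `V` being treated as occupied), then `[A_η]^V = [A_{η^{yz}}]^V`. -/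
theorem boot_closure_invariant (d k L : ℕ) (hd : 2 ≤ d) (hk2 : 2 ≤ k) (hkd : k ≤ d)
    (A : Finset (Zd d)) (hA : A ⊆ lamSet d L) (V : Set (Zd d)) (hV : V ⊆ ↑(lamSet d L))
    (y z : Zd d) (hy : y ∈ V) (hz : z ∈ V) (hyz : dist1 y z = 1)
    (hcy : k - 1 ≤ Set.ncard {w | w ∈ nbrs y ∧ w ∈ V ∧ w ≠ z ∧ w ∉ A})
    (hcz : k - 1 ≤ Set.ncard {w | w ∈ nbrs z ∧ w ∈ V ∧ w ≠ y ∧ w ∉ A}) :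
    bootCl d k V (emptiesOf d L A) = bootCl d k V (emptiesOf d L (swapC A y z)) := by
  classical
  by_cases hyA : y ∈ A <;> by_cases hzA : z ∈ A
  · -- both occupied: swap is trivial
    have : swapC A y z = A := by simp [swapC, hyA, hzA]
    rw [this]
  · -- y occupied, z empty
    have : swapC A y z = insert z (A.erase y) := by simp [swapC, hyA, hzA]
    rw [this]
    exact swap_case hk2 A V hV y z hy hz hyz hcy hcz hyA hzA
  · -- z occupied, y empty
    have : swapC A y z = insert y (A.erase z) := by simp [swapC, hyA, hzA]
    rw [this]
    exact swap_case hk2 A V hV z y hz hy (dist1_comm y z ▸ hyz) hcz hcy hzA hyA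
  · -- both empty: swap is trivial
    have : swapC A y z = A := by simp [swapC, hyA, hzA]
    rw [this]
end
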